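/- arXiv:2106.12095 — 4 statements merged into one kernel-verified Lean document; each statement's English description precedes it below -/
import Mathlib

section
/- Let ℓ be a prime number. The Haar probability measure μ on ℤ_ℓ × ℤ_ℓ of the set {(a,b) ∈ ℤ_ℓ × ℤ_ℓ : 4a³ + 27b² is a unit of ℤ_ℓ} equals 1 − ℓ^{-1}. -/
open MeasureTheory
open scoped ENNReal

noncomputable instance padicIntMeasurableSpace (ℓ : ℕ) [Fact ℓ.Prime] :
    MeasurableSpace ℤ_[ℓ] := borel _

instance padicIntBorelSpace (ℓ : ℕ) [Fact ℓ.Prime] : BorelSpace ℤ_[ℓ] := ⟨rfl⟩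

/-!
Reduction mod `ℓ` is a surjective additive map `ℤ_ℓ × ℤ_ℓ → 𝔽_ℓ × 𝔽_ℓ` with open kernel, so by
translation invariance each of its `ℓ²` fibres has measure `ℓ⁻²`. The quantity `4a³ + 27b²` fails
to be a unit exactly when the reduction of `(a, b)` lies on the cuspidal cubic `4a³ + 27b² = 0`,
which has exactly `ℓ` points over `𝔽_ℓ`: for `ℓ > 3` it is parametrised by `t ↦ (-3t², 2t³)`.
The non-units therefore have measure `ℓ · ℓ⁻² = ℓ⁻¹`.
-/

open Finset

lemma AddMonoidHom.preimage_singleton_apply {X G : Type*} [AddGroup X] [AddGroup G]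
    (φ : X →+ G) (c : X) : φ ⁻¹' {φ c} = (-c + ·) ⁻¹' φ.ker := by
  ext w
  simp only [Set.mem_preimage, Set.mem_singleton_iff, SetLike.mem_coe, AddMonoidHom.mem_ker,
    map_add, map_neg, neg_add_eq_zero]
  exact eq_comm

section FibresOfSurjectiveHom

variable {X G : Type*} [AddGroup X] [MeasurableSpace X] [MeasurableAdd X] [AddGroup G]
  {φ : X →+ G}

lemma measurableSet_preimage_of_measurableSet_ker [Countable G] (hφ : Function.Surjective φ)
    (hker : MeasurableSet (φ.ker : Set X)) (S : Set G) : MeasurableSet (φ ⁻¹' S) := by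
  rw [← Set.biUnion_preimage_singleton]
  refine .biUnion S.to_countable fun g _ ↦ ?_
  obtain ⟨c, rfl⟩ := hφ g
  rw [φ.preimage_singleton_apply c]
  exact measurable_const_add (-c) hker

lemma measure_preimage_singleton_eq_measure_ker (μ : Measure X) [μ.IsAddLeftInvariant]
    (hφ : Function.Surjective φ) (g : G) : μ (φ ⁻¹' {g}) = μ φ.ker := by
  obtain ⟨c, rfl⟩ := hφ g
  rw [φ.preimage_singleton_apply c, measure_preimage_add]

variable [Fintype G] (μ : Measure X) [IsProbabilityMeasure μ] [μ.IsAddLeftInvariant]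

lemma measure_ker_eq_inv_card (hφ : Function.Surjective φ)
    (hker : MeasurableSet (φ.ker : Set X)) : μ φ.ker = (Fintype.card G : ℝ≥0∞)⁻¹ := by
  have hsum := sum_measure_preimage_singleton (μ := μ) univ
    fun g _ ↦ measurableSet_preimage_of_measurableSet_ker hφ hker {g}
  simp only [measure_preimage_singleton_eq_measure_ker μ hφ, sum_const, card_univ, coe_univ,
    Set.preimage_univ, measure_univ, nsmul_eq_mul] at hsum
  exact ENNReal.eq_inv_of_mul_eq_one_left (by rwa [mul_comm])

lemma measure_preimage_finset (hφ : Function.Surjective φ)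
    (hker : MeasurableSet (φ.ker : Set X)) (S : Finset G) :
    μ (φ ⁻¹' S) = #S * (Fintype.card G : ℝ≥0∞)⁻¹ := by
  rw [← sum_measure_preimage_singleton S
    fun g _ ↦ measurableSet_preimage_of_measurableSet_ker hφ hker {g}]
  simp [measure_preimage_singleton_eq_measure_ker μ hφ, measure_ker_eq_inv_card μ hφ hker]

end FibresOfSurjectiveHom

def cuspidalLocus (K : Type*) [CommRing K] [Fintype K] [DecidableEq K] : Finset (K × K) :=
  {v | 4 * v.1 ^ 3 + 27 * v.2 ^ 2 = 0}

lemma card_cuspidalLocus {K : Type*} [Field K] [Fintype K] [DecidableEq K] (h2 : (2 : K) ≠ 0)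
    (h3 : (3 : K) ≠ 0) : #(cuspidalLocus K) = Fintype.card K := by
  -- the inverse `(a, b) ↦ -3b / (2a)` is also right at the cusp `(0, 0)`, as `x / 0 = 0`
  refine (card_nbij' (fun t ↦ (-3 * t ^ 2, 2 * t ^ 3)) (fun v ↦ -3 * v.2 / (2 * v.1))
    ?_ ?_ ?_ ?_).symm
  · intro t _
    simp only [cuspidalLocus, coe_filter, mem_univ, true_and, Set.mem_ofPred_eq]
    ring
  · simp
  · intro t _
    rcases eq_or_ne t 0 with rfl | ht
    · simp
    · field_simp
  · rintro ⟨a, b⟩ hab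
    simp only [cuspidalLocus, coe_filter, mem_univ, true_and, Set.mem_ofPred_eq] at hab
    rcases eq_or_ne a 0 with rfl | ha
    · have h27 : (27 : K) ≠ 0 := by
        rw [show (27 : K) = 3 ^ 3 by norm_num]
        exact pow_ne_zero 3 h3
      have hb : b = 0 := by simpa [h27] using hab
      simp [hb]
    · simp only [Prod.mk.injEq]
      constructor
      · field_simp
        linear_combination -hab
      · field_simp
        linear_combination (-b) * hab

lemma ZMod.natCast_ne_zero_of_prime {ℓ p : ℕ} [Fact ℓ.Prime] (hp : p.Prime) (h : p ≠ ℓ) :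
    (p : ZMod ℓ) ≠ 0 := by
  rw [Ne, ZMod.natCast_eq_zero_iff]
  exact fun hdvd ↦ h ((Nat.prime_dvd_prime_iff_eq Fact.out hp).mp hdvd).symm

lemma ZMod.card_cuspidalLocus_two : #(cuspidalLocus (ZMod 2)) = 2 := by decide

lemma ZMod.card_cuspidalLocus_three : #(cuspidalLocus (ZMod 3)) = 3 := by decide

lemma ZMod.card_cuspidalLocus (ℓ : ℕ) [Fact ℓ.Prime] : #(cuspidalLocus (ZMod ℓ)) = ℓ := by
  rcases eq_or_ne ℓ 2 with rfl | h2
  · exact card_cuspidalLocus_two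
  rcases eq_or_ne ℓ 3 with rfl | h3
  · exact card_cuspidalLocus_three
  rw [_root_.card_cuspidalLocus (mod_cast natCast_ne_zero_of_prime Nat.prime_two h2.symm)
    (mod_cast natCast_ne_zero_of_prime Nat.prime_three h3.symm), ZMod.card]

namespace PadicInt

variable {ℓ : ℕ} [Fact ℓ.Prime]

lemma not_isUnit_iff_toZMod_eq_zero {x : ℤ_[ℓ]} : ¬IsUnit x ↔ toZMod x = 0 := by
  rw [← RingHom.mem_ker, ker_toZMod, IsLocalRing.mem_maximalIdeal, mem_nonunits_iff]

variable (ℓ) in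
noncomputable def toZModProd : ℤ_[ℓ] × ℤ_[ℓ] →+ ZMod ℓ × ZMod ℓ :=
  (toZMod.prodMap toZMod : ℤ_[ℓ] × ℤ_[ℓ] →+* ZMod ℓ × ZMod ℓ).toAddMonoidHom

lemma toZModProd_surjective : Function.Surjective (toZModProd ℓ) :=
  (ZMod.ringHom_surjective toZMod).prodMap (ZMod.ringHom_surjective toZMod)

lemma measurableSet_ker_toZModProd :
    MeasurableSet ((toZModProd ℓ).ker : Set (ℤ_[ℓ] × ℤ_[ℓ])) := by
  have hker : ((toZModProd ℓ).ker : Set (ℤ_[ℓ] × ℤ_[ℓ])) =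
      (IsLocalRing.maximalIdeal ℤ_[ℓ] : Set ℤ_[ℓ]) ×ˢ IsLocalRing.maximalIdeal ℤ_[ℓ] := by
    ext w
    simp [toZModProd, Prod.ext_iff, ← ker_toZMod]
  rw [hker]
  exact (IsLocalRing.isOpen_maximalIdeal _).measurableSet.prod
    (IsLocalRing.isOpen_maximalIdeal _).measurableSet

lemma setOf_isUnit_eq_compl_preimage_cuspidalLocus :
    {w : ℤ_[ℓ] × ℤ_[ℓ] | IsUnit (4 * w.1 ^ 3 + 27 * w.2 ^ 2)} =
      (toZModProd ℓ ⁻¹' cuspidalLocus (ZMod ℓ))ᶜ := by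
  ext w
  rw [Set.mem_compl_iff, ← not_iff_not, not_not]
  simp [not_isUnit_iff_toZMod_eq_zero, cuspidalLocus, toZModProd, map_ofNat]

lemma measurableSet_preimage_toZModProd (S : Set (ZMod ℓ × ZMod ℓ)) :
    MeasurableSet (toZModProd ℓ ⁻¹' S) :=
  -- naming `X` and `G` up front avoids a very slow unification of the instances on `ZMod ℓ`
  measurableSet_preimage_of_measurableSet_ker (X := ℤ_[ℓ] × ℤ_[ℓ]) (G := ZMod ℓ × ZMod ℓ)
    toZModProd_surjective measurableSet_ker_toZModProd S

lemma measure_preimage_toZModProd (μ : Measure (ℤ_[ℓ] × ℤ_[ℓ])) [IsProbabilityMeasure μ]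
    [μ.IsAddLeftInvariant] (S : Finset (ZMod ℓ × ZMod ℓ)) :
    μ (toZModProd ℓ ⁻¹' S) = #S * ((ℓ : ℝ≥0∞) * ℓ)⁻¹ := by
  rw [measure_preimage_finset μ toZModProd_surjective measurableSet_ker_toZModProd,
    Fintype.card_prod, ZMod.card, Nat.cast_mul]

end PadicInt

open PadicInt in
/-- The Haar probability measure of
`{(a,b) ∈ ℤ_ℓ × ℤ_ℓ : 4a³ + 27b² is a unit}` equals `1 - ℓ⁻¹`. -/
theorem stmt3 (ℓ : ℕ) [Fact ℓ.Prime]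
    (μ : Measure (ℤ_[ℓ] × ℤ_[ℓ])) [IsProbabilityMeasure μ] [μ.IsAddLeftInvariant] :
    μ {w : ℤ_[ℓ] × ℤ_[ℓ] | IsUnit (4 * w.1 ^ 3 + 27 * w.2 ^ 2)} =
      1 - (ℓ : ℝ≥0∞)⁻¹ := by
  have hℓ : (ℓ : ℝ≥0∞) ≠ 0 := by exact_mod_cast (Fact.out : ℓ.Prime).ne_zero
  rw [setOf_isUnit_eq_compl_preimage_cuspidalLocus,
    prob_compl_eq_one_sub (measurableSet_preimage_toZModProd _), measure_preimage_toZModProd, ZMod.card_cuspidalLocus,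
    ENNReal.mul_inv (.inl hℓ) (.inl (ENNReal.natCast_ne_top ℓ)), ← mul_assoc,
    ENNReal.mul_inv_cancel hℓ (ENNReal.natCast_ne_top ℓ), one_mul]
end

section
/- Let ℓ ≥ 5 be a prime number and m ≥ 1 an integer. The number of pairs (a,b) ∈ (ℤ/ℓ^m ℤ) × (ℤ/ℓ^m ℤ) such that 4a³ + 27b² = 0 in ℤ/ℓ^m ℤ and the reduction of (a,b) modulo ℓ is not (0,0) equals ℓ^{m−1}(ℓ−1). -/
/-!
Over any commutative ring in which `2` and `3` are units, `u ↦ (-3u², 2u³)` is a bijection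
from the units onto the points `(a, b)` of `4a³ + 27b² = 0` with `a` a unit, with inverse
`(a, b) ↦ -3b / (2a)`; on that curve `a` is a unit exactly when `b` is. In `ℤ/ℓᵐℤ` an element
is a unit exactly when its reduction mod `ℓ` is nonzero, so the pairs being counted are these
points, and there are `φ(ℓᵐ) = ℓᵐ⁻¹(ℓ - 1)` of them.
-/

theorem eq_of_sq_eq_of_pow_three_eq {M : Type*} [CancelMonoid M] {u v : M}
    (h2 : u ^ 2 = v ^ 2) (h3 : u ^ 3 = v ^ 3) : u = v := by
  refine mul_left_cancel (a := u ^ 2) ?_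
  calc u ^ 2 * u = v ^ 3 := (pow_succ u 2).symm.trans h3
    _ = u ^ 2 * v := by rw [h2, pow_succ]

section Cusp

variable {R : Type*} [CommRing R]

theorem isUnit_iff_isUnit_of_disc_eq_zero (h2 : IsUnit (2 : R)) (h3 : IsUnit (3 : R)) {a b : R}
    (h : 4 * a ^ 3 + 27 * b ^ 2 = 0) : IsUnit a ↔ IsUnit b := by
  have h4 : IsUnit (4 : R) := by simpa [show (2 : R) ^ 2 = 4 by norm_num] using h2.pow 2
  have h27 : IsUnit (27 : R) := by simpa [show (3 : R) ^ 3 = 27 by norm_num] using h3.pow 3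
  have hab : 4 * a ^ 3 = -(27 * b ^ 2) := eq_neg_of_add_eq_zero_left h
  calc IsUnit a ↔ IsUnit (4 * a ^ 3) := by rw [h4.mul_left_iff, isUnit_pow_iff three_ne_zero]
    _ ↔ IsUnit (27 * b ^ 2) := by rw [hab, IsUnit.neg_iff]
    _ ↔ IsUnit b := by rw [h27.mul_left_iff, isUnit_pow_iff two_ne_zero]

def cuspParam (h3 : IsUnit (3 : R)) (u : Rˣ) :
    {w : R × R // 4 * w.1 ^ 3 + 27 * w.2 ^ 2 = 0 ∧ IsUnit w.1} :=
  ⟨(-3 * u ^ 2, 2 * u ^ 3), by ring, h3.neg.mul (u.isUnit.pow 2)⟩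

theorem cuspParam_injective (h2 : IsUnit (2 : R)) (h3 : IsUnit (3 : R)) :
    Function.Injective (cuspParam h3) := by
  intro u v huv
  obtain ⟨hfst, hsnd⟩ := Prod.ext_iff.mp (congrArg Subtype.val huv)
  refine eq_of_sq_eq_of_pow_three_eq (Units.ext ?_) (Units.ext ?_)
  · simpa using h3.neg.mul_left_cancel hfst
  · simpa using h2.mul_left_cancel hsnd

theorem cuspParam_surjective (h2 : IsUnit (2 : R)) (h3 : IsUnit (3 : R)) :
    Function.Surjective (cuspParam h3) := by
  rintro ⟨⟨a, b⟩, hdisc, ha⟩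
  have hb : IsUnit b := (isUnit_iff_isUnit_of_disc_eq_zero h2 h3 hdisc).mp ha
  set c : R := ↑(h2.mul ha).unit⁻¹
  have hc : 2 * a * c = 1 := (h2.mul ha).mul_val_inv
  have ht : IsUnit (-3 * b * c) := (h3.neg.mul hb).mul (Units.isUnit _)
  refine ⟨ht.unit, Subtype.ext (Prod.ext ?_ ?_)⟩
  · change -3 * (ht.unit : R) ^ 2 = a
    rw [ht.unit_spec]
    linear_combination (-(c ^ 2)) * hdisc + (a * (2 * a * c + 1)) * hc
  · change 2 * (ht.unit : R) ^ 3 = b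
    rw [ht.unit_spec]
    linear_combination (-2 * b * c ^ 3) * hdisc + (b * ((2 * a * c) ^ 2 + 2 * a * c + 1)) * hc

noncomputable def cuspParamEquiv (h2 : IsUnit (2 : R)) (h3 : IsUnit (3 : R)) :
    Rˣ ≃ {w : R × R // 4 * w.1 ^ 3 + 27 * w.2 ^ 2 = 0 ∧ IsUnit w.1} :=
  Equiv.ofBijective (cuspParam h3) ⟨cuspParam_injective h2 h3, cuspParam_surjective h2 h3⟩

end Cusp

theorem ZMod.isUnit_iff_castHom_ne_zero {p d : ℕ} (hp : p.Prime) (h : p ∣ p ^ d)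
    (x : ZMod (p ^ d)) : IsUnit x ↔ ZMod.castHom h (ZMod p) x ≠ 0 := by
  have hd : 0 < d := Nat.pos_of_ne_zero (by rintro rfl; exact hp.not_dvd_one (by simpa using h))
  have : NeZero (p ^ d) := NeZero.of_pos (pow_pos hp.pos d)
  rw [← ZMod.natCast_zmod_val x, ZMod.isUnit_natCast_iff_not_dvd_pow hp hd, map_natCast, Ne,
    ZMod.natCast_eq_zero_iff]

/-- For a prime `ℓ ≥ 5` and `m ≥ 1`, the number of pairs `(a,b) ∈ (ℤ/ℓᵐℤ)²` with
`4a³ + 27b² = 0` whose reduction mod `ℓ` is not `(0,0)` equals `ℓ^{m-1}(ℓ-1)`. -/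
theorem stmt4 (ℓ m : ℕ) (hℓ : ℓ.Prime) (h5 : 5 ≤ ℓ) (hm : 1 ≤ m) :
    Nat.card {w : ZMod (ℓ ^ m) × ZMod (ℓ ^ m) //
        4 * w.1 ^ 3 + 27 * w.2 ^ 2 = 0 ∧
        ¬ (ZMod.castHom (dvd_pow_self ℓ (Nat.one_le_iff_ne_zero.mp hm)) (ZMod ℓ) w.1 = 0 ∧
           ZMod.castHom (dvd_pow_self ℓ (Nat.one_le_iff_ne_zero.mp hm)) (ZMod ℓ) w.2 = 0)} =
      ℓ ^ (m - 1) * (ℓ - 1) := by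
  have : NeZero (ℓ ^ m) := NeZero.of_pos (pow_pos hℓ.pos m)
  have isUnit_small_prime (q : ℕ) (hq : q.Prime) (hq5 : q < 5) : IsUnit (q : ZMod (ℓ ^ m)) :=
    ZMod.isUnit_prime_of_not_dvd hq fun hdvd =>
      absurd ((Nat.prime_dvd_prime_iff_eq hq hℓ).mp (hq.dvd_of_dvd_pow hdvd)) (by omega)
  have h2 : IsUnit (2 : ZMod (ℓ ^ m)) := by
    exact_mod_cast isUnit_small_prime 2 Nat.prime_two (by norm_num)
  have h3 : IsUnit (3 : ZMod (ℓ ^ m)) := by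
    exact_mod_cast isUnit_small_prime 3 Nat.prime_three (by norm_num)
  have hred := ZMod.isUnit_iff_castHom_ne_zero hℓ (dvd_pow_self ℓ (Nat.one_le_iff_ne_zero.mp hm))
  calc _ = Nat.card {w : ZMod (ℓ ^ m) × ZMod (ℓ ^ m) //
          4 * w.1 ^ 3 + 27 * w.2 ^ 2 = 0 ∧ IsUnit w.1} :=
        Nat.card_congr <| Equiv.subtypeEquivRight fun w => and_congr_right fun hdisc => by
          rw [not_and_or, ← ne_eq, ← ne_eq, ← hred, ← hred,
            ← isUnit_iff_isUnit_of_disc_eq_zero h2 h3 hdisc, or_self]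
    _ = Nat.card (ZMod (ℓ ^ m))ˣ := Nat.card_congr (cuspParamEquiv h2 h3).symm
    _ = ℓ ^ (m - 1) * (ℓ - 1) := by
      rw [Nat.card_eq_fintype_card, ZMod.card_units_eq_totient, Nat.totient_prime_pow hℓ hm]
end

section
/- Let ℓ ≥ 5 be a prime number and n ≥ 1 an integer. The Haar probability measure μ on ℤ_ℓ × ℤ_ℓ of the set {(a,b) ∈ ℤ_ℓ × ℤ_ℓ : (a,b) is not congruent to (0,0) modulo ℓ, and v(4a³ + 27b²) ≥ n} equals (ℓ−1)/ℓ^{n+1}. -/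
/-!
Both conditions only depend on `(a, b)` modulo `ℓⁿ`, so by translation invariance the measure is
`#T / ℓ²ⁿ`, where `T` is the set of pairs `(x, y)` over `ℤ/ℓⁿ`, not both divisible by `ℓ`, with
`4x³ + 27y² = 0`. Since `6` is invertible, such `x` and `y` are both units, and `X³ + xX + y`
has the double root `t = -3y/2x`, so `(x, y) = (-3t², 2t³)`. This parametrises `T` by the units
of `ℤ/ℓⁿ`, giving `#T = φ(ℓⁿ) = (ℓ - 1)ℓⁿ⁻¹`.
-/

open MeasureTheory
open scoped ENNReal

section FiniteQuotient

variable {G H : Type*} [AddGroup G] [AddGroup H]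

theorem AddMonoidHom.preimage_singleton_eq_preimage_ker (φ : G →+ H) (x : G) :
    φ ⁻¹' {φ x} = (-x + ·) ⁻¹' (φ.ker : Set G) := by
  ext y
  simp only [Set.mem_preimage, Set.mem_singleton_iff, SetLike.mem_coe, AddMonoidHom.mem_ker,
    map_add, map_neg, neg_add_eq_zero]
  exact eq_comm

theorem AddMonoidHom.measure_preimage_eq_card_div [MeasurableSpace G] [MeasurableAdd G]
    [Finite H] (μ : Measure G) [IsProbabilityMeasure μ] [μ.IsAddLeftInvariant]
    (φ : G →+ H) (hφ : Function.Surjective φ) (hker : MeasurableSet (φ.ker : Set G))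
    (S : Set H) :
    μ (φ ⁻¹' S) = Nat.card S / Nat.card H := by
  have hfiber (c : H) : μ (φ ⁻¹' {c}) = μ φ.ker ∧ MeasurableSet (φ ⁻¹' {c}) := by
    obtain ⟨x, rfl⟩ := hφ c
    rw [φ.preimage_singleton_eq_preimage_ker]
    exact ⟨measure_preimage_add μ _ _, measurable_const_add _ hker⟩
  have hker_measure : μ φ.ker = (Nat.card H : ℝ≥0∞)⁻¹ := by
    have hindex := AddSubgroup.index_mul_measure φ.ker hker μ
    rw [AddSubgroup.index_ker, AddMonoidHom.range_eq_top.mpr hφ, AddSubgroup.card_top,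
      measure_univ] at hindex
    exact ENNReal.eq_inv_of_mul_eq_one_left (by rwa [mul_comm])
  have hS : μ (φ ⁻¹' S) = Nat.card S * μ φ.ker := by
    rw [← tsum_measure_preimage_singleton S.toFinite.countable fun c _ => (hfiber c).2]
    simp only [fun c => (hfiber c).1, ENNReal.tsum_const]
    rw [ENat.card_coe_set_eq, ← S.toFinite.cast_ncard_eq, ENat.toENNReal_coe,
      Nat.card_coe_set_eq]
  rw [hS, hker_measure, div_eq_mul_inv]

end FiniteQuotient

section SingularPairs

variable (R : Type*) [CommRing R]

def primitiveSingularPairs : Set (R × R) :=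
  {p | (IsUnit p.1 ∨ IsUnit p.2) ∧ 4 * p.1 ^ 3 + 27 * p.2 ^ 2 = 0}

variable {R}

/-- The coefficients of `X³ - 3t²X + 2t³ = (X - t)²(X + 2t)`. -/
def cuspidalPair (t : Rˣ) : R × R := (-3 * t ^ 2, 2 * t ^ 3)

variable (h2 : IsUnit (2 : R)) (h3 : IsUnit (3 : R))
include h2 h3

theorem cuspidalPair_injective : Function.Injective (cuspidalPair (R := R)) := by
  intro t s h
  simp only [cuspidalPair, Prod.mk.injEq] at h
  have hsq : t ^ 2 = s ^ 2 := Units.ext (by push_cast; exact h3.neg.mul_left_cancel h.1)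
  have hcube : t ^ 2 * t = s ^ 2 * s := Units.ext (by
    push_cast
    rw [← pow_succ, ← pow_succ]
    exact h2.mul_left_cancel h.2)
  rw [hsq] at hcube
  exact mul_left_cancel hcube

theorem isUnit_and_isUnit_of_mem_primitiveSingularPairs {x y : R}
    (h : (x, y) ∈ primitiveSingularPairs R) : IsUnit x ∧ IsUnit y := by
  obtain ⟨hxy, hdisc⟩ := h
  have h4 : IsUnit (4 : R) := by convert h2.pow 2; norm_num
  have h27 : IsUnit (27 : R) := by convert h3.pow 3; norm_num
  rcases hxy with hx | hy
  · have : IsUnit (27 * y ^ 2) := by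
      rw [eq_neg_of_add_eq_zero_right hdisc]
      exact (h4.mul (hx.pow 3)).neg
    exact ⟨hx, (isUnit_pow_iff two_ne_zero).mp (isUnit_of_mul_isUnit_right this)⟩
  · have : IsUnit (4 * x ^ 3) := by
      rw [eq_neg_of_add_eq_zero_left hdisc]
      exact (h27.mul (hy.pow 2)).neg
    exact ⟨(isUnit_pow_iff three_ne_zero).mp (isUnit_of_mul_isUnit_right this), hy⟩

theorem range_cuspidalPair : Set.range (cuspidalPair (R := R)) = primitiveSingularPairs R := by
  ext ⟨x, y⟩
  constructor
  · rintro ⟨t, ht⟩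
    simp only [cuspidalPair, Prod.mk.injEq] at ht
    obtain ⟨rfl, rfl⟩ := ht
    exact ⟨Or.inl (h3.neg.mul (t.isUnit.pow 2)), by ring⟩
  · intro hmem
    obtain ⟨hx, hy⟩ := isUnit_and_isUnit_of_mem_primitiveSingularPairs h2 h3 hmem
    have hdisc := hmem.2
    -- the double root of `X³ + xX + y` is `-3y / 2x`
    refine ⟨-(h3.unit * hy.unit * hx.unit⁻¹ * h2.unit⁻¹), ?_⟩
    have hxa := hx.mul_val_inv
    have h2b := h2.mul_val_inv
    simp only [cuspidalPair, Prod.mk.injEq, Units.val_neg, Units.val_mul, IsUnit.unit_spec]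
    set a := ((hx.unit⁻¹ : Rˣ) : R)
    set b := ((h2.unit⁻¹ : Rˣ) : R)
    constructor
    · linear_combination (-a^2*b^2) * hdisc + (4*x*b^2*(x*a+1)) * hxa + (x*(2*b+1)) * h2b
    · linear_combination (-2*y*a^3*b^3) * hdisc + (8*y*b^3*(x^2*a^2+x*a+1)) * hxa +
          (y*(4*b^2+2*b+1)) * h2b

theorem card_primitiveSingularPairs : Nat.card (primitiveSingularPairs R) = Nat.card Rˣ := by
  rw [← range_cuspidalPair h2 h3, Nat.card_range_of_injective (cuspidalPair_injective h2 h3)]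

end SingularPairs

theorem ZMod.isUnit_prime_primePow_of_ne {p q : ℕ} (hp : p.Prime) (hq : q.Prime) (hqp : q ≠ p)
    (n : ℕ) : IsUnit (q : ZMod (p ^ n)) :=
  ZMod.isUnit_prime_of_not_dvd hq fun h =>
    hqp ((Nat.prime_dvd_prime_iff_eq hq hp).mp (hq.dvd_of_dvd_pow h))

namespace PadicInt

variable {p : ℕ} [hp : Fact p.Prime]

theorem pow_dvd_iff_toZModPow_eq_zero (n : ℕ) (x : ℤ_[p]) :
    (p : ℤ_[p]) ^ n ∣ x ↔ toZModPow n x = 0 := by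
  rw [← Ideal.mem_span_singleton, ← ker_toZModPow, RingHom.mem_ker]

theorem toZModPow_preimage_zero (n : ℕ) :
    toZModPow n ⁻¹' {0} = Metric.closedBall (0 : ℤ_[p]) ((p : ℝ) ^ (-(n : ℤ))) := by
  ext x
  rw [Set.mem_preimage, Set.mem_singleton_iff, Metric.mem_closedBall, dist_zero_right,
    norm_le_pow_iff_mem_span_pow, ← ker_toZModPow, RingHom.mem_ker]

theorem isUnit_iff_not_dvd {x : ℤ_[p]} : IsUnit x ↔ ¬ (p : ℤ_[p]) ∣ x := by
  rw [← norm_lt_one_iff_dvd, ← not_isUnit_iff, not_not]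

theorem isUnit_toZModPow_iff {n : ℕ} (hn : n ≠ 0) {x : ℤ_[p]} :
    IsUnit (toZModPow n x) ↔ IsUnit x := by
  refine ⟨fun hx => isUnit_iff_not_dvd.mpr ?_, IsUnit.map _⟩
  rintro ⟨c, rfl⟩
  have : Fact (1 < p ^ n) := ⟨Nat.one_lt_pow hn hp.out.one_lt⟩
  have hnil : IsNilpotent (p : ZMod (p ^ n)) := ⟨n, by rw [← Nat.cast_pow, ZMod.natCast_self]⟩
  rw [map_mul, map_natCast] at hx
  exact ((Commute.all _ _).isNilpotent_mul_right hnil).not_isUnit hx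

noncomputable def toZModPowPair (n : ℕ) : ℤ_[p] × ℤ_[p] →+ ZMod (p ^ n) × ZMod (p ^ n) :=
  ((toZModPow n).prodMap (toZModPow n)).toAddMonoidHom

theorem coe_toZModPowPair (n : ℕ) :
    ⇑(toZModPowPair (p := p) n) = Prod.map (toZModPow n) (toZModPow n) :=
  RingHom.coe_prodMap _ _

theorem toZModPowPair_surjective (n : ℕ) : Function.Surjective (toZModPowPair (p := p) n) :=
  coe_toZModPowPair (p := p) n ▸
    (ZMod.ringHom_surjective (toZModPow n)).prodMap (ZMod.ringHom_surjective (toZModPow n))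

theorem measurableSet_ker_toZModPowPair (n : ℕ) :
    MeasurableSet ((toZModPowPair (p := p) n).ker : Set (ℤ_[p] × ℤ_[p])) := by
  rw [AddMonoidHom.coe_ker, coe_toZModPowPair, Prod.zero_eq_mk, ← Set.singleton_prod_singleton,
    Set.preimage_prod_map_prod, toZModPow_preimage_zero]
  exact measurableSet_closedBall.prod measurableSet_closedBall

theorem toZModPowPair_preimage_primitiveSingularPairs {n : ℕ} (hn : n ≠ 0) :
    toZModPowPair n ⁻¹' primitiveSingularPairs (ZMod (p ^ n)) =
      {w : ℤ_[p] × ℤ_[p] | ¬ ((p : ℤ_[p]) ∣ w.1 ∧ (p : ℤ_[p]) ∣ w.2) ∧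
        (p : ℤ_[p]) ^ n ∣ 4 * w.1 ^ 3 + 27 * w.2 ^ 2} := by
  ext w
  simp only [coe_toZModPowPair, primitiveSingularPairs, Set.mem_ofPred_eq, Set.mem_preimage,
    Prod.map_fst, Prod.map_snd, isUnit_toZModPow_iff hn, isUnit_iff_not_dvd,
    pow_dvd_iff_toZModPow_eq_zero, not_and_or, map_add, map_mul, map_pow, map_ofNat]

end PadicInt

/-- For a prime `ℓ ≥ 5` and `n ≥ 1`, the Haar probability measure of the set of
`(a,b) ∈ ℤ_ℓ × ℤ_ℓ` with `(a,b) ≢ (0,0) mod ℓ` and `v(4a³+27b²) ≥ n`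
equals `(ℓ-1)/ℓ^{n+1}`. -/
theorem stmt6 (ℓ : ℕ) [Fact ℓ.Prime] (h5 : 5 ≤ ℓ) (n : ℕ) (hn : 1 ≤ n)
    (μ : Measure (ℤ_[ℓ] × ℤ_[ℓ])) [IsProbabilityMeasure μ] [μ.IsAddLeftInvariant] :
    μ {w : ℤ_[ℓ] × ℤ_[ℓ] |
        ¬ ((ℓ : ℤ_[ℓ]) ∣ w.1 ∧ (ℓ : ℤ_[ℓ]) ∣ w.2) ∧
        (ℓ : ℤ_[ℓ]) ^ n ∣ (4 * w.1 ^ 3 + 27 * w.2 ^ 2)} =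
      ((ℓ : ℝ≥0∞) - 1) / (ℓ : ℝ≥0∞) ^ (n + 1) := by
  have hℓ : ℓ.Prime := Fact.out
  have h2 : IsUnit (2 : ZMod (ℓ ^ n)) := by
    exact_mod_cast ZMod.isUnit_prime_primePow_of_ne hℓ Nat.prime_two (by omega) n
  have h3 : IsUnit (3 : ZMod (ℓ ^ n)) := by
    exact_mod_cast ZMod.isUnit_prime_primePow_of_ne hℓ Nat.prime_three (by omega) n
  rw [← PadicInt.toZModPowPair_preimage_primitiveSingularPairs (by omega),
    AddMonoidHom.measure_preimage_eq_card_div μ _ (PadicInt.toZModPowPair_surjective n)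
      (PadicInt.measurableSet_ker_toZModPowPair n),
    card_primitiveSingularPairs h2 h3, Nat.card_prod, Nat.card_zmod, Nat.card_eq_fintype_card,
    ZMod.card_units_eq_totient, Nat.totient_prime_pow hℓ (by omega)]
  have hsplit : ℓ ^ n * ℓ ^ n = ℓ ^ (n - 1) * ℓ ^ (n + 1) := by
    rw [← pow_add, ← pow_add]; congr 1; omega
  rw [hsplit]
  push_cast [ENNReal.natCast_sub]
  exact ENNReal.mul_div_mul_left _ _ (pow_ne_zero _ (by exact_mod_cast hℓ.ne_zero))
    (ENNReal.pow_ne_top (ENNReal.natCast_ne_top ℓ))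
end

section
/- Call a pair (a,b) ∈ ℤ × ℤ minimal if there is no prime ℓ with ℓ⁴ ∣ a and ℓ⁶ ∣ b. For x > 0, let N(x) denote the number of pairs (a,b) ∈ ℤ × ℤ with H(a,b) := max(4|a|³, 27b²) ≤ x, and let N_min(x) denote the number of such pairs that are minimal. Then N_min(x)/N(x) tends to 1/ζ(10) = ∏_ℓ (1 − ℓ^{-10}) as x → ∞, where the product is over all primes ℓ and ζ(10) = ∑_{n≥1} n^{-10}. -/
/-!
Write `g(a, b)` for the largest `d` with `d⁴ ∣ a` and `d⁶ ∣ b`: its divisors are exactly the `d`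
with `d⁴ ∣ a` and `d⁶ ∣ b`, so `(a, b)` is minimal exactly when `g(a, b) = 1`. The height bound
`H(a, b) ≤ x` cuts out the rectangle `|a| ≤ A, |b| ≤ B` with `A = ⌊(x/4)^(1/3)⌋`,
`B = ⌊(x/27)^(1/2)⌋`, and Möbius inversion over the divisors of `g` counts its minimal points as
`∑_d μ(d) ((2⌊A/d⁴⌋ + 1)(2⌊B/d⁶⌋ + 1) - 1)`, the `- 1` discarding the origin. After division by
`(2A + 1)(2B + 1)` the `d`-th term tends to `μ(d) d⁻¹⁰` and is bounded by `d⁻⁴`, so dominated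
convergence gives the density `∑ μ(d) d⁻¹⁰`. The Euler products of `n ↦ n⁻¹⁰` and
`n ↦ μ(n) n⁻¹⁰` identify this with `1/ζ(10) = ∏_ℓ (1 - ℓ⁻¹⁰)`.
-/

open Filter Finset ArithmeticFunction
open scoped Topology ArithmeticFunction.Moebius

lemma sum_moebius_ite_dvd {g : ℕ} (hg : g ≠ 0) {D : Finset ℕ} (hD : g.divisors ⊆ D) :
    ∑ d ∈ D, (if d ∣ g then μ d else 0) = if g = 1 then 1 else 0 := by
  have hfilter : {d ∈ D | d ∣ g} = g.divisors := by
    ext d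
    simp only [mem_filter, Nat.mem_divisors, hg, ne_eq, not_false_eq_true, and_true]
    exact ⟨And.right, fun h => ⟨hD (Nat.mem_divisors.2 ⟨h, hg⟩), h⟩⟩
  rw [← sum_filter, hfilter, ← coe_mul_zeta_apply, moebius_mul_coe_zeta, one_apply]

/-- The largest `d` with `d ^ i ∣ a` and `d ^ j ∣ b`; it is `0` when `a = b = 0`. -/
def jointFloorRoot (i j : ℕ) (a b : ℤ) : ℕ :=
  Nat.gcd (Nat.floorRoot i a.natAbs) (Nat.floorRoot j b.natAbs)

section jointFloorRoot

variable {i j d : ℕ} {a b : ℤ}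

lemma dvd_jointFloorRoot_iff :
    d ∣ jointFloorRoot i j a b ↔ (d : ℤ) ^ i ∣ a ∧ (d : ℤ) ^ j ∣ b := by
  simp only [jointFloorRoot, Nat.dvd_gcd_iff, ← Nat.pow_dvd_iff_dvd_floorRoot, ← Nat.cast_pow,
    Int.natCast_dvd]

lemma jointFloorRoot_eq_zero_iff (hi : i ≠ 0) (hj : j ≠ 0) :
    jointFloorRoot i j a b = 0 ↔ a = 0 ∧ b = 0 := by
  simp [jointFloorRoot, hi, hj]

lemma jointFloorRoot_eq_one_iff :
    jointFloorRoot i j a b = 1 ↔ ∀ ℓ : ℕ, ℓ.Prime → ¬((ℓ : ℤ) ^ i ∣ a ∧ (ℓ : ℤ) ^ j ∣ b) := by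
  simp only [Nat.eq_one_iff_not_exists_prime_dvd, dvd_jointFloorRoot_iff]

lemma le_natAbs_add_natAbs_of_dvd_jointFloorRoot (hi : i ≠ 0) (hj : j ≠ 0)
    (hab : ¬(a = 0 ∧ b = 0)) (hd : d ∣ jointFloorRoot i j a b) : d ≤ a.natAbs + b.natAbs := by
  rw [dvd_jointFloorRoot_iff, ← Nat.cast_pow, ← Nat.cast_pow, Int.natCast_dvd,
    Int.natCast_dvd] at hd
  by_cases ha : a = 0
  · have hb : b.natAbs ≠ 0 := by simpa [ha] using hab
    calc d ≤ d ^ j := Nat.le_self_pow hj d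
      _ ≤ b.natAbs := Nat.le_of_dvd (Nat.pos_of_ne_zero hb) hd.2
      _ ≤ _ := Nat.le_add_left _ _
  · calc d ≤ d ^ i := Nat.le_self_pow hi d
      _ ≤ a.natAbs := Nat.le_of_dvd (Int.natAbs_pos.2 ha) hd.1
      _ ≤ _ := Nat.le_add_right _ _

end jointFloorRoot

noncomputable def intRect (A B : ℕ) : Finset (ℤ × ℤ) := Icc (-(A : ℤ)) A ×ˢ Icc (-(B : ℤ)) B

lemma mem_intRect {A B : ℕ} {w : ℤ × ℤ} :
    w ∈ intRect A B ↔ w.1.natAbs ≤ A ∧ w.2.natAbs ≤ B := by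
  simp only [intRect, mem_product, mem_Icc, ← abs_le, Int.abs_eq_natAbs, Nat.cast_le]

lemma card_intRect (A B : ℕ) : #(intRect A B) = (2 * A + 1) * (2 * B + 1) := by
  have hcard : ∀ n : ℕ, ((n : ℤ) + 1 - -(n : ℤ)).toNat = 2 * n + 1 := fun n => by omega
  rw [intRect, card_product, Int.card_Icc, Int.card_Icc, hcard, hcard]

lemma card_filter_dvd_Icc_neg_self (n : ℕ) {m : ℕ} (hm : 0 < m) :
    #{a ∈ Icc (-(n : ℤ)) n | (m : ℤ) ∣ a} = 2 * (n / m) + 1 := by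
  have hm' : (0 : ℤ) < m := by exact_mod_cast hm
  have hscale : ∀ c : ℤ, |(m : ℤ) * c| ≤ n ↔ |c| ≤ ((n / m : ℕ) : ℤ) := fun c => by
    rw [Int.natCast_div, abs_mul, abs_of_pos hm', Int.le_ediv_iff_mul_le hm', mul_comm]
  have himage : {a ∈ Icc (-(n : ℤ)) n | (m : ℤ) ∣ a} =
      (Icc (-((n / m : ℕ) : ℤ)) (n / m : ℕ)).map
        ⟨((m : ℤ) * ·), mul_right_injective₀ hm'.ne'⟩ := by
    ext a
    simp only [mem_filter, Finset.mem_map, mem_Icc, ← abs_le, Function.Embedding.coeFn_mk]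
    constructor
    · rintro ⟨ha, c, rfl⟩
      exact ⟨c, (hscale c).1 ha, rfl⟩
    · rintro ⟨c, hc, rfl⟩
      exact ⟨(hscale c).2 hc, dvd_mul_right _ _⟩
  rw [himage, card_map, Int.card_Icc]
  omega

lemma card_filter_intRect_pow_dvd (i j A B : ℕ) {d : ℕ} (hd : 0 < d) :
    #{w ∈ intRect A B | (d : ℤ) ^ i ∣ w.1 ∧ (d : ℤ) ^ j ∣ w.2} =
      (2 * (A / d ^ i) + 1) * (2 * (B / d ^ j) + 1) := by
  simp only [← Nat.cast_pow]
  rw [intRect, filter_product, card_product, card_filter_dvd_Icc_neg_self _ (by positivity),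
    card_filter_dvd_Icc_neg_self _ (by positivity)]

lemma card_filter_intRect_jointFloorRoot_eq_one {i j : ℕ} (hi : i ≠ 0) (hj : j ≠ 0) (A B : ℕ) :
    (#{w ∈ intRect A B | jointFloorRoot i j w.1 w.2 = 1} : ℤ) =
      ∑ d ∈ Icc 1 (A + B),
        μ d * ((#{w ∈ intRect A B | (d : ℤ) ^ i ∣ w.1 ∧ (d : ℤ) ^ j ∣ w.2} : ℤ) - 1) := by
  set g : ℤ × ℤ → ℕ := fun w => jointFloorRoot i j w.1 w.2
  have hzero : (0 : ℤ × ℤ) ∈ intRect A B := mem_intRect.2 (by simp)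
  have hg0 : g 0 = 0 := (jointFloorRoot_eq_zero_iff hi hj).2 ⟨rfl, rfl⟩
  have hmoebius : ∀ w ∈ (intRect A B).erase 0,
      (if g w = 1 then 1 else 0 : ℤ) = ∑ d ∈ Icc 1 (A + B), if d ∣ g w then μ d else 0 := by
    intro w hw
    obtain ⟨hw0, hw⟩ := mem_erase.1 hw
    have hw0 : ¬(w.1 = 0 ∧ w.2 = 0) := fun h => hw0 (Prod.ext h.1 h.2)
    have hgw : g w ≠ 0 := mt (jointFloorRoot_eq_zero_iff hi hj).1 hw0
    refine (sum_moebius_ite_dvd hgw fun d hd => ?_).symm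
    have hdA := le_natAbs_add_natAbs_of_dvd_jointFloorRoot hi hj hw0 (Nat.dvd_of_mem_divisors hd)
    have hwA := mem_intRect.1 hw
    exact mem_Icc.2 ⟨Nat.pos_of_mem_divisors hd, by omega⟩
  have hcount : ∀ d, #{w ∈ (intRect A B).erase 0 | d ∣ g w} + 1 =
      #{w ∈ intRect A B | (d : ℤ) ^ i ∣ w.1 ∧ (d : ℤ) ^ j ∣ w.2} := by
    intro d
    simp only [g, ← dvd_jointFloorRoot_iff, filter_erase]
    exact card_erase_add_one (mem_filter.2 ⟨hzero, by simp [jointFloorRoot]⟩)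
  calc (#{w ∈ intRect A B | g w = 1} : ℤ)
      = ∑ w ∈ (intRect A B).erase 0, if g w = 1 then 1 else 0 := by
        rw [← natCast_card_filter, filter_erase, erase_eq_of_notMem (by simp [hg0])]
    _ = ∑ d ∈ Icc 1 (A + B), ∑ w ∈ (intRect A B).erase 0, if d ∣ g w then μ d else 0 := by
        rw [sum_congr rfl hmoebius, sum_comm]
    _ = _ := by
        refine sum_congr rfl fun d _ => ?_
        rw [← sum_filter, sum_const, nsmul_eq_mul, ← hcount]
        push_cast
        ring

noncomputable def rectMoebiusTerm (i j A B d : ℕ) : ℝ :=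
  μ d * ((((2 * (A / d ^ i) + 1) * (2 * (B / d ^ j) + 1) : ℕ) : ℝ) - 1) /
    (((2 * A + 1) * (2 * B + 1) : ℕ) : ℝ)

lemma card_filter_intRect_div_card {i j : ℕ} (hi : i ≠ 0) (hj : j ≠ 0) (A B : ℕ) :
    (#{w ∈ intRect A B | jointFloorRoot i j w.1 w.2 = 1} : ℝ) / #(intRect A B) =
      ∑' d, rectMoebiusTerm i j A B d := by
  have hsupport : ∀ d ∉ Icc 1 (A + B), rectMoebiusTerm i j A B d = 0 := by
    intro d hd
    rcases Nat.eq_zero_or_pos d with rfl | hd0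
    · simp [rectMoebiusTerm]
    have hlt : A + B < d := by
      rw [mem_Icc] at hd
      omega
    have hA : A < d ^ i := by linarith [Nat.le_self_pow hi d]
    have hB : B < d ^ j := by linarith [Nat.le_self_pow hj d]
    simp [rectMoebiusTerm, Nat.div_eq_of_lt hA, Nat.div_eq_of_lt hB]
  have hcount :=
    congrArg (Int.cast : ℤ → ℝ) (card_filter_intRect_jointFloorRoot_eq_one hi hj A B)
  push_cast at hcount
  rw [tsum_eq_sum hsupport, hcount, card_intRect, sum_div]
  refine sum_congr rfl fun d hd => ?_
  rw [card_filter_intRect_pow_dvd _ _ _ _ (mem_Icc.1 hd).1, rectMoebiusTerm, mul_div_assoc]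

lemma tendsto_two_mul_div_add_one_div {k : ℕ} (hk : 0 < k) :
    Tendsto (fun n : ℕ => ((2 * (n / k) + 1 : ℕ) : ℝ) / ((2 * n + 1 : ℕ) : ℝ)) atTop
      (𝓝 (k : ℝ)⁻¹) := by
  have hlimit : ∀ c : ℝ, Tendsto (fun n : ℕ => (c + 2 / k * n) / (1 + 2 * n)) atTop
      (𝓝 (k : ℝ)⁻¹) := fun c => by
    convert tendsto_add_mul_div_add_mul_atTop_nhds c 1 (2 / k : ℝ) two_ne_zero using 2
    field_simp
  have hfloor : (n : ℕ) → (n : ℝ) / k - 1 < ((n / k : ℕ) : ℝ) ∧ ((n / k : ℕ) : ℝ) ≤ n / k :=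
    fun n => ⟨Nat.floor_div_eq_div (K := ℝ) n k ▸ Nat.sub_one_lt_floor _, Nat.cast_div_le⟩
  refine tendsto_of_tendsto_of_tendsto_of_le_of_le (hlimit (-1)) (hlimit 1) (fun n => ?_)
    (fun n => ?_) <;>
  · dsimp only
    push_cast
    rw [add_comm 1 (2 * (n : ℝ))]
    refine div_le_div_of_nonneg_right ?_ (by positivity)
    have : 2 / (k : ℝ) * n = 2 * (n / k) := by ring
    linarith [hfloor n]

lemma tendsto_rectMoebiusTerm {α : Type*} {l : Filter α} {A B : α → ℕ}
    (hA : Tendsto A l atTop) (hB : Tendsto B l atTop) (i j d : ℕ) :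
    Tendsto (fun t => rectMoebiusTerm i j (A t) (B t) d) l
      (𝓝 (μ d * ((d : ℝ) ^ (i + j))⁻¹)) := by
  rcases Nat.eq_zero_or_pos d with rfl | hd
  · simpa [rectMoebiusTerm] using tendsto_const_nhds
  have hsplit : ∀ A B : ℕ, rectMoebiusTerm i j A B d =
      μ d * (((2 * (A / d ^ i) + 1 : ℕ) : ℝ) / ((2 * A + 1 : ℕ) : ℝ) *
        (((2 * (B / d ^ j) + 1 : ℕ) : ℝ) / ((2 * B + 1 : ℕ) : ℝ)) -
          ((2 * A + 1 : ℕ) : ℝ)⁻¹ * ((2 * B + 1 : ℕ) : ℝ)⁻¹) := fun A B => by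
    rw [rectMoebiusTerm]
    push_cast
    field_simp
  have hfactor (k : ℕ) (C : α → ℕ) (hC : Tendsto C l atTop) :=
    (tendsto_two_mul_div_add_one_div (pow_pos hd k)).comp hC
  have hinv (C : α → ℕ) (hC : Tendsto C l atTop) :
      Tendsto (fun t => ((2 * C t + 1 : ℕ) : ℝ)⁻¹) l (𝓝 0) :=
    tendsto_inv_atTop_zero.comp <| tendsto_natCast_atTop_atTop.comp <|
      tendsto_atTop_mono (fun t => by omega) hC
  have hlim := ((hfactor i A hA).mul (hfactor j B hB)).sub ((hinv A hA).mul (hinv B hB))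
  rw [mul_zero, sub_zero, Nat.cast_pow, Nat.cast_pow, ← mul_inv, ← pow_add] at hlim
  simpa only [hsplit, Function.comp_apply] using hlim.const_mul (μ d : ℝ)

lemma abs_rectMoebiusTerm_le {i j : ℕ} (hij : i ≤ j) (A B d : ℕ) :
    |rectMoebiusTerm i j A B d| ≤ ((d : ℝ) ^ i)⁻¹ := by
  rcases Nat.eq_zero_or_pos d with rfl | hd
  · simp [rectMoebiusTerm]
  set a := A / d ^ i
  set b := B / d ^ j
  have ha : (a : ℝ) * d ^ i ≤ A := by exact_mod_cast Nat.div_mul_le_self A (d ^ i)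
  have hb : (b : ℝ) * d ^ j ≤ B := by exact_mod_cast Nat.div_mul_le_self B (d ^ j)
  have hbB : (b : ℝ) ≤ B := by exact_mod_cast Nat.div_le_self B (d ^ j)
  have hpow : (d : ℝ) ^ i ≤ (d : ℝ) ^ j := pow_le_pow_right₀ (by exact_mod_cast hd) hij
  have ha0 : (0 : ℝ) ≤ a := Nat.cast_nonneg a
  have hb0 : (0 : ℝ) ≤ b := Nat.cast_nonneg b
  have hnum : 0 ≤ (((2 * a + 1) * (2 * b + 1) : ℕ) : ℝ) - 1 := by
    push_cast
    nlinarith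
  -- `(4ab + 2a + 2b) dⁱ ≤ 4AB + 2A + 2B`, using `a dⁱ ≤ A`, `b dⁱ ≤ b dʲ ≤ B` and `b ≤ B`
  have hkey : ((((2 * a + 1) * (2 * b + 1) : ℕ) : ℝ) - 1) * d ^ i ≤
      (((2 * A + 1) * (2 * B + 1) : ℕ) : ℝ) := by
    push_cast
    nlinarith [mul_le_mul_of_nonneg_right ha hb0, mul_le_mul_of_nonneg_left hbB (Nat.cast_nonneg A),
      mul_le_mul_of_nonneg_left hpow hb0]
  rw [rectMoebiusTerm, abs_div, abs_mul, abs_of_nonneg hnum, Nat.abs_cast,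
    div_le_iff₀ (by positivity)]
  calc |(μ d : ℝ)| * ((((2 * a + 1) * (2 * b + 1) : ℕ) : ℝ) - 1)
      ≤ (((2 * a + 1) * (2 * b + 1) : ℕ) : ℝ) - 1 :=
        mul_le_of_le_one_left hnum (by exact_mod_cast abs_moebius_le_one)
    _ ≤ _ := by
      rw [inv_mul_eq_div, le_div_iff₀ (by positivity)]
      exact hkey

theorem tendsto_card_filter_intRect_div_card {α : Type*} {l : Filter α} {A B : α → ℕ}
    (hA : Tendsto A l atTop) (hB : Tendsto B l atTop) {i j : ℕ} (hi : 2 ≤ i) (hij : i ≤ j) :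
    Tendsto (fun t => (#{w ∈ intRect (A t) (B t) | jointFloorRoot i j w.1 w.2 = 1} : ℝ) /
        #(intRect (A t) (B t))) l (𝓝 (∑' d : ℕ, μ d * ((d : ℝ) ^ (i + j))⁻¹)) := by
  simp only [card_filter_intRect_div_card (by omega : i ≠ 0) (by omega : j ≠ 0)]
  refine tendsto_tsum_of_dominated_convergence (bound := fun d : ℕ => ((d : ℝ) ^ i)⁻¹)
    (Real.summable_nat_pow_inv.2 (by omega)) (tendsto_rectMoebiusTerm hA hB i j) ?_
  exact Eventually.of_forall fun t d => abs_rectMoebiusTerm_le hij _ _ d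

noncomputable def invPowHom {k : ℕ} (hk : k ≠ 0) : ℕ →*₀ ℝ where
  toFun n := ((n : ℝ) ^ k)⁻¹
  map_zero' := by simp [hk]
  map_one' := by simp
  map_mul' m n := by push_cast; rw [mul_pow, mul_inv]

lemma hasProd_one_sub_inv_pow {k : ℕ} (hk : 1 < k) :
    HasProd (fun p : Nat.Primes => 1 - ((p : ℝ) ^ k)⁻¹) (∑' n : ℕ, ((n : ℝ) ^ k)⁻¹)⁻¹ := by
  have hsum : Summable (fun n : ℕ => ((n : ℝ) ^ k)⁻¹) := Real.summable_nat_pow_inv.2 hk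
  have hpos : 0 < ∑' n : ℕ, ((n : ℝ) ^ k)⁻¹ :=
    hsum.tsum_pos (fun n => by positivity) 1 (by norm_num)
  have heuler := EulerProduct.eulerProduct_completely_multiplicative_hasProd
    (f := invPowHom (by omega : k ≠ 0)) (by simpa [invPowHom] using hsum)
  simpa [invPowHom] using heuler.inv₀ hpos.ne'

lemma tsum_moebius_mul_inv_pow {k : ℕ} (hk : 1 < k) :
    ∑' n : ℕ, μ n * ((n : ℝ) ^ k)⁻¹ = (∑' n : ℕ, ((n : ℝ) ^ k)⁻¹)⁻¹ := by
  set f : ℕ → ℝ := fun n => μ n * ((n : ℝ) ^ k)⁻¹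
  have hsum : Summable (‖f ·‖) := by
    refine (Real.summable_nat_pow_inv.2 hk).of_nonneg_of_le (fun _ => norm_nonneg _) fun n => ?_
    rw [norm_mul, norm_inv, norm_pow, Real.norm_natCast, Real.norm_eq_abs, ← Int.cast_abs]
    exact mul_le_of_le_one_left (by positivity) (by exact_mod_cast abs_moebius_le_one)
  have hmul {m n : ℕ} (hmn : m.Coprime n) : f (m * n) = f m * f n := by
    simp only [f, isMultiplicative_moebius.map_mul_of_coprime hmn]
    push_cast
    rw [mul_pow, mul_inv]
    ring
  have hprime (p : Nat.Primes) : ∑' e, f (p ^ e) = 1 - ((p : ℝ) ^ k)⁻¹ := by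
    have hsupport : ∀ e ∉ range 2, f (p ^ e) = 0 := fun e he => by
      simp only [mem_range, not_lt] at he
      simp [f, moebius_apply_prime_pow p.2 (by omega : e ≠ 0), show e ≠ 1 by omega]
    rw [tsum_eq_sum hsupport, sum_range_succ, sum_range_one]
    simp [f, moebius_apply_prime p.2, sub_eq_add_neg]
  have heuler := EulerProduct.eulerProduct_hasProd (f := f) (by simp [f]) hmul hsum (by simp [f])
  simp only [hprime] at heuler
  exact heuler.unique (hasProd_one_sub_inv_pow hk)

lemma le_floor_rpow_inv_iff {x : ℝ} (hx : 0 ≤ x) {n : ℕ} (hn : n ≠ 0) (m : ℕ) :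
    m ≤ ⌊x ^ (n⁻¹ : ℝ)⌋₊ ↔ (m : ℝ) ^ n ≤ x := by
  rw [Nat.le_floor_iff (by positivity),
    Real.le_rpow_inv_iff_of_pos (by positivity) hx (by positivity), Real.rpow_natCast]

lemma height_le_iff_mem_intRect {x : ℝ} (hx : 0 ≤ x) (w : ℤ × ℤ) :
    ((max (4 * |w.1| ^ 3) (27 * w.2 ^ 2) : ℤ) : ℝ) ≤ x ↔
      w ∈ intRect ⌊(x / 4) ^ (3⁻¹ : ℝ)⌋₊ ⌊(x / 27) ^ (2⁻¹ : ℝ)⌋₊ := by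
  have h3 := le_floor_rpow_inv_iff (x := x / 4) (by positivity) (n := 3) (by norm_num) w.1.natAbs
  have h2 := le_floor_rpow_inv_iff (x := x / 27) (by positivity) (n := 2) (by norm_num) w.2.natAbs
  rw [Nat.cast_ofNat] at h3 h2
  rw [mem_intRect, h3, h2, le_div_iff₀ (by norm_num), le_div_iff₀ (by norm_num), Int.cast_max,
    max_le_iff]
  push_cast [Nat.cast_natAbs, Int.cast_abs, sq_abs]
  rw [mul_comm, mul_comm (b := (27 : ℝ))]

/-- The density, with respect to the naive height `H(a,b) = max(4|a|³, 27b²)`, of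
minimal pairs `(a,b) ∈ ℤ²` (no prime `ℓ` with `ℓ⁴ ∣ a` and `ℓ⁶ ∣ b`) is
`1/ζ(10) = ∏_ℓ (1 - ℓ^{-10})`. -/
theorem stmt8 :
    Tendsto
      (fun x : ℝ =>
        (Nat.card {w : ℤ × ℤ //
            ((max (4 * |w.1| ^ 3) (27 * w.2 ^ 2) : ℤ) : ℝ) ≤ x ∧
            ∀ ℓ : ℕ, ℓ.Prime → ¬ ((ℓ : ℤ) ^ 4 ∣ w.1 ∧ (ℓ : ℤ) ^ 6 ∣ w.2)} : ℝ) /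
        (Nat.card {w : ℤ × ℤ //
            ((max (4 * |w.1| ^ 3) (27 * w.2 ^ 2) : ℤ) : ℝ) ≤ x} : ℝ))
      atTop (nhds ((∑' n : ℕ, (1 : ℝ) / ((n : ℝ) + 1) ^ 10)⁻¹)) ∧
    (∑' n : ℕ, (1 : ℝ) / ((n : ℝ) + 1) ^ 10)⁻¹ =
      ∏' ℓ : {q : ℕ // q.Prime}, (1 - (((ℓ : ℕ) : ℝ) ^ 10)⁻¹) := by
  have hzeta : ∑' n : ℕ, (1 : ℝ) / ((n : ℝ) + 1) ^ 10 = ∑' n : ℕ, ((n : ℝ) ^ 10)⁻¹ := by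
    rw [(Real.summable_nat_pow_inv.2 (by norm_num)).tsum_eq_zero_add]
    simp
  rw [hzeta]
  refine ⟨?_, (hasProd_one_sub_inv_pow (by norm_num)).tprod_eq.symm⟩
  have hA : Tendsto (fun x : ℝ => ⌊(x / 4) ^ (3⁻¹ : ℝ)⌋₊) atTop atTop :=
    tendsto_nat_floor_atTop.comp <| (tendsto_rpow_atTop (by norm_num)).comp <|
      tendsto_id.atTop_div_const (by norm_num)
  have hB : Tendsto (fun x : ℝ => ⌊(x / 27) ^ (2⁻¹ : ℝ)⌋₊) atTop atTop :=
    tendsto_nat_floor_atTop.comp <| (tendsto_rpow_atTop (by norm_num)).comp <|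
      tendsto_id.atTop_div_const (by norm_num)
  rw [← tsum_moebius_mul_inv_pow (by norm_num)]
  refine (tendsto_card_filter_intRect_div_card hA hB (i := 4) (j := 6) (by norm_num)
    (by norm_num)).congr' ?_
  filter_upwards [eventually_ge_atTop 0] with x hx
  rw [Nat.subtype_card {w ∈ intRect _ _ | jointFloorRoot 4 6 w.1 w.2 = 1} fun w => by
      rw [mem_filter, height_le_iff_mem_intRect hx, jointFloorRoot_eq_one_iff],
    Nat.subtype_card _ fun w => (height_le_iff_mem_intRect hx w).symm]
end
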